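/- Let G be a group, σ an endomorphism of G, g ∈ G, and suppose g' = ρ_{(g,1)^r}(1_G) satisfies σ^{rt}(g') = 1_G for all t with rt ≥ k (for some fixed k). Then for all t with rt ≥ k and all s ≥ 0, ρ_{(g,1)^{r(t+1)+s}}(1_G) = ρ_{(g,1)^{rt+s}}(1_G); that is, the orbit of 1_G under ρ_{(g,1)} is eventually periodic with period dividing r. -/

import Mathlib

/-- Multiplication in the semidirect product `G ⋊_σ ℕ`:
`(g,s)(g',s') = (g·σ^s(g'), s+s')`. -/
def sdMul {G : Type*} [Monoid G] (σ : Monoid.End G) (x y : G × ℕ) : G × ℕ :=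
  (x.1 * (σ ^ x.2) y.1, x.2 + y.2)

/-- The `t`-th power in the semidirect product `G ⋊_σ ℕ`. -/
def sdPow {G : Type*} [Monoid G] (σ : Monoid.End G) (x : G × ℕ) : ℕ → G × ℕ
  | 0 => (1, 0)
  | t + 1 => sdMul σ x (sdPow σ x t)

/-- The transformation `ρ_{(g,s)} : G → G`, `x ↦ g·σ^s(x)`. -/
def rho {G : Type*} [Monoid G] (σ : Monoid.End G) (x : G × ℕ) : G → G :=
  fun z => x.1 * (σ ^ x.2) z

lemma sdMul_assoc {G : Type*} [Monoid G] (σ : Monoid.End G) (a b c : G × ℕ) :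
    sdMul σ (sdMul σ a b) c = sdMul σ a (sdMul σ b c) := by
  simp only [sdMul, map_mul, pow_add, Monoid.End.coe_mul, Function.comp_apply, mul_assoc,
    add_assoc]

lemma sdPow_add {G : Type*} [Monoid G] (σ : Monoid.End G) (x : G × ℕ) (m n : ℕ) :
    sdPow σ x (m + n) = sdMul σ (sdPow σ x m) (sdPow σ x n) := by
  induction m with
  | zero => simp [sdPow, sdMul]
  | succ m ih =>
      have : m + 1 + n = (m + n) + 1 := by omega
      rw [this]
      show sdMul σ x (sdPow σ x (m + n)) = _
      rw [ih]
      show _ = sdMul σ (sdMul σ x (sdPow σ x m)) _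
      rw [sdMul_assoc]

lemma sdPow_snd {G : Type*} [Monoid G] (σ : Monoid.End G) (g : G) (n : ℕ) :
    (sdPow σ (g, 1) n).2 = n := by
  induction n with
  | zero => rfl
  | succ n ih => show 1 + (sdPow σ (g, 1) n).2 = n + 1; omega

/-- if `g' = ρ_{(g,1)^r}(1_G)` satisfies `σ^{rt}(g') = 1` whenever `rt ≥ k`,
then `ρ_{(g,1)^{r(t+1)+s}}(1_G) = ρ_{(g,1)^{rt+s}}(1_G)` for all such `t` and all `s`:
the orbit of `1_G` is eventually periodic with period dividing `r`. -/
theorem sdlp_eventually_periodic {G : Type*} [Group G] (σ : Monoid.End G)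
    (g : G) (r k : ℕ) (hr : 0 < r)
    (hker : ∀ t : ℕ, k ≤ r * t → (σ ^ (r * t)) (rho σ (sdPow σ (g, 1) r) 1) = 1) :
    ∀ t s : ℕ, k ≤ r * t →
      rho σ (sdPow σ (g, 1) (r * (t + 1) + s)) 1 = rho σ (sdPow σ (g, 1) (r * t + s)) 1 := by
  intro t s ht
  have hk := hker t ht
  simp only [rho, map_one, mul_one] at hk ⊢
  have h1 : r * (t + 1) + s = s + (r * t + r) := by ring
  have h2 : r * t + s = s + r * t := by ring
  rw [h1, h2, sdPow_add, sdPow_add σ (g,1) (r*t) r, sdMul, sdMul]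
  simp only [sdPow_snd, map_mul]
  rw [hk, map_one, mul_one, sdPow_add, sdMul]
  simp [sdPow_snd]
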